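/- arXiv:1603.00577 — 5 statements merged into one kernel-verified Lean document; each statement's English description precedes it below -/
import Mathlib

section
/- Let k ≥ 1 and let g_1, …, g_k be the free generators of the free group F_k, with λ the left regular representation on ℓ²(F_k). For every matrix A = (a_{ij}) ∈ M_k(ℂ), one has k^{-1} ‖Σ_{i,j=1}^k a_{ij} λ(g_i g_j^{-1})‖ ≤ k^{-1} |Tr A| + (3/k) (Σ_{i≠j} |a_{ij}|²)^{1/2}, where the norm on the left is the operator norm on ℓ²(F_k). -/
open scoped ENNReal

noncomputable section

variable {α : Type*}

private theorem lpShift_mem (e : α ≃ α) (ξ : lp (fun _ : α => ℂ) 2) :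
    Memℓp (fun x => ξ (e x)) (2 : ℝ≥0∞) := by
  have hp : 0 < (2 : ℝ≥0∞).toReal := by norm_num
  refine (memℓp_gen_iff hp).2 ?_
  exact e.summable_iff.2 ((memℓp_gen_iff hp).1 (lp.memℓp ξ))

/-- Composition with an index equivalence, as a continuous linear map on `ℓ²`. -/
def lpShift (e : α ≃ α) :
    lp (fun _ : α => ℂ) 2 →L[ℂ] lp (fun _ : α => ℂ) 2 :=
  LinearMap.mkContinuous
    { toFun := fun ξ => (⟨fun x => ξ (e x), lpShift_mem e ξ⟩ : lp (fun _ : α => ℂ) 2)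
      map_add' := fun ξ η => lp.ext <| funext fun x => by
        simp only [lp.coeFn_add, Pi.add_apply]
      map_smul' := fun c ξ => lp.ext <| funext fun x => by
        simp only [lp.coeFn_smul, Pi.smul_apply, RingHom.id_apply] } 1 <| by
    intro ξ
    have hp : 0 < (2 : ℝ≥0∞).toReal := by norm_num
    have : ‖(⟨fun x => ξ (e x), lpShift_mem e ξ⟩ : lp (fun _ : α => ℂ) 2)‖ = ‖ξ‖ := by
      rw [lp.norm_eq_tsum_rpow hp, lp.norm_eq_tsum_rpow hp]
      congr 1
      exact e.tsum_eq fun x => ‖ξ x‖ ^ (2 : ℝ≥0∞).toReal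
    simpa using this.le

/-- The left regular representation of a group `G` on `ℓ²(G)`:
`(lam g ξ) x = ξ (g⁻¹ * x)`. -/
def lam {G : Type*} [Group G] (g : G) :
    lp (fun _ : G => ℂ) 2 →L[ℂ] lp (fun _ : G => ℂ) 2 :=
  lpShift (Equiv.mulLeft g⁻¹)

/-!
Split off `(Tr A) • 1`; what remains is `T = ∑_{i ≠ j} a_{ij} λ(gᵢ gⱼ⁻¹)`, with
`(T ξ) x = ∑_{i ≠ j} a_{ij} ξ(gⱼ gᵢ⁻¹ x)`. Sort the terms by how much of `gⱼ gᵢ⁻¹` cancels against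
the reduced word of `x`: nothing, the letter `gᵢ⁻¹` only, or both letters. Each of the three
resulting operators has norm at most `σ = (∑_{i ≠ j} |a_{ij}|²)^{1/2}`: after Cauchy–Schwarz at each
`x`, it suffices that among the pairs active at a common point, `gⱼ gᵢ⁻¹ x` determines `(i, j)` and
`x`. It does: in the first case `gⱼ gᵢ⁻¹ x` begins with `gⱼ gᵢ⁻¹`; in the second `x` begins with `gᵢ`
and `gⱼ gᵢ⁻¹ x` with `gⱼ`; in the third `x` begins with `gᵢ gⱼ⁻¹`. Hence `‖T‖ ≤ 3σ`.
-/

theorem Finset.sum_sum_eq_sum_add_sum_offDiag {M : Type*} [AddCommMonoid M] [DecidableEq α]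
    (s : Finset α) (f : α → α → M) :
    ∑ i ∈ s, ∑ j ∈ s, f i j = ∑ i ∈ s, f i i + ∑ p ∈ s.offDiag, f p.1 p.2 := by
  rw [← Finset.sum_product', ← Finset.diag_union_offDiag,
    Finset.sum_union (Finset.disjoint_diag_offDiag s), Finset.diag, Finset.sum_map]
  rfl

theorem norm_sum_mul_sq_le {ι R : Type*} [SeminormedRing R] (s : Finset ι) (c v : ι → R) :
    ‖∑ i ∈ s, c i * v i‖ ^ 2 ≤ (∑ i ∈ s, ‖c i‖ ^ 2) * ∑ i ∈ s, ‖v i‖ ^ 2 :=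
  calc ‖∑ i ∈ s, c i * v i‖ ^ 2 ≤ (∑ i ∈ s, ‖c i‖ * ‖v i‖) ^ 2 := by
        gcongr
        exact (norm_sum_le _ _).trans (Finset.sum_le_sum fun i _ => norm_mul_le _ _)
    _ ≤ _ := Finset.sum_mul_sq_le_sq_mul_sq s _ _

namespace lp

section Indicator

variable {X E : Type*} [NormedAddCommGroup E] {p : ℝ≥0∞}

def indicator (s : Set X) (f : lp (fun _ : X => E) p) : lp (fun _ : X => E) p :=
  ⟨s.indicator f, (lp.memℓp f).mono' fun _ => norm_indicator_le_norm_self _ _⟩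

theorem indicator_compl_add_indicator_diff_add_indicator {s t : Set X} (hts : t ⊆ s)
    (f : lp (fun _ : X => E) p) :
    indicator sᶜ f + indicator (s \ t) f + indicator t f = f := by
  ext x
  change sᶜ.indicator f x + (s \ t).indicator f x + t.indicator f x = f x
  by_cases ht : x ∈ t
  · simp [ht, hts ht]
  · by_cases hs : x ∈ s <;> simp [hs, ht]

end Indicator

section SumSq

variable {X : Type*} {E : X → Type*} [∀ x, NormedAddCommGroup (E x)]

theorem sum_norm_sq_le_norm_sq (f : lp E 2) (s : Finset X) :
    ∑ x ∈ s, ‖f x‖ ^ 2 ≤ ‖f‖ ^ 2 := by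
  have h := sum_rpow_le_norm_rpow (p := 2) (by norm_num) f s
  simp only [ENNReal.toReal_ofNat, Real.rpow_two] at h
  exact h

theorem norm_le_of_forall_sum_norm_sq_le {f : lp E 2} {C : ℝ} (hC : 0 ≤ C)
    (h : ∀ s : Finset X, ∑ x ∈ s, ‖f x‖ ^ 2 ≤ C ^ 2) : ‖f‖ ≤ C :=
  norm_le_of_forall_sum_le (p := 2) (by norm_num) hC
    (by simp only [ENNReal.toReal_ofNat, Real.rpow_two]; exact h)

end SumSq

theorem sum_norm_sq_comp_le_norm_sq {X Y E : Type*} [NormedAddCommGroup E]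
    (f : lp (fun _ : X => E) 2) (t : Finset Y) {φ : Y → X} (hφ : Set.InjOn φ t) :
    ∑ y ∈ t, ‖f (φ y)‖ ^ 2 ≤ ‖f‖ ^ 2 := by
  classical
  calc ∑ y ∈ t, ‖f (φ y)‖ ^ 2 = ∑ x ∈ t.image φ, ‖f x‖ ^ 2 :=
        (Finset.sum_image (f := fun x => ‖f x‖ ^ 2) hφ).symm
    _ ≤ ‖f‖ ^ 2 := sum_norm_sq_le_norm_sq f _

end lp

theorem lam_apply {G : Type*} [Group G] (g : G) (ξ : lp (fun _ : G => ℂ) 2) (x : G) :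
    lam g ξ x = ξ (g⁻¹ * x) :=
  rfl

theorem lam_one {G : Type*} [Group G] :
    lam (1 : G) = ContinuousLinearMap.id ℂ (lp (fun _ : G => ℂ) 2) := by
  ext ξ x
  rw [lam_apply, inv_one, one_mul, ContinuousLinearMap.id_apply]


theorem norm_sum_smul_indicator_lam_le {G ι : Type*} [Group G] (s : Finset ι) (c : ι → ℂ)
    (g : ι → G) (D : ι → Set G)
    (hsep : ∀ q ∈ s, ∀ p ∈ s, ∀ p' ∈ s, ∀ x ∈ D p ∩ D q, ∀ x' ∈ D p' ∩ D q,
      (g p)⁻¹ * x = (g p')⁻¹ * x' → p = p')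
    (ξ : lp (fun _ : G => ℂ) 2) :
    ‖∑ p ∈ s, c p • lp.indicator (D p) (lam (g p) ξ)‖ ≤ √(∑ p ∈ s, ‖c p‖ ^ 2) * ‖ξ‖ := by
  classical
  set v := ∑ p ∈ s, c p • lp.indicator (D p) (lam (g p) ξ)
  have hv (x : G) : v x = ∑ p ∈ s with x ∈ D p, c p * ξ ((g p)⁻¹ * x) := by
    rw [Finset.sum_filter, lp.coeFn_sum, Finset.sum_apply]
    refine Finset.sum_congr rfl fun p _ => ?_
    change c p * (D p).indicator (lam (g p) ξ) x = _
    by_cases hx : x ∈ D p <;> simp [hx, lam_apply]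
  have hpt (x : G) : ‖v x‖ ^ 2 ≤
      ∑ q ∈ s, ‖c q‖ ^ 2 * ∑ p ∈ s with x ∈ D p ∧ x ∈ D q, ‖ξ ((g p)⁻¹ * x)‖ ^ 2 := by
    rw [hv]
    refine (norm_sum_mul_sq_le _ _ _).trans (le_of_eq ?_)
    rw [Finset.sum_mul, Finset.sum_filter]
    refine Finset.sum_congr rfl fun q _ => ?_
    by_cases hq : x ∈ D q <;> simp [hq]
  have hinj (q) (hq : q ∈ s) (t : Finset G) :
      ∑ x ∈ t, ∑ p ∈ s with x ∈ D p ∧ x ∈ D q, ‖ξ ((g p)⁻¹ * x)‖ ^ 2 ≤ ‖ξ‖ ^ 2 := by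
    have hsum : ∑ x ∈ t, ∑ p ∈ s with x ∈ D p ∧ x ∈ D q, ‖ξ ((g p)⁻¹ * x)‖ ^ 2 =
        ∑ px ∈ s ×ˢ t with px.2 ∈ D px.1 ∧ px.2 ∈ D q, ‖ξ ((g px.1)⁻¹ * px.2)‖ ^ 2 := by
      simp only [Finset.sum_filter, Finset.sum_product_right]
    rw [hsum]
    refine lp.sum_norm_sq_comp_le_norm_sq ξ _ fun a ha b hb hab => ?_
    simp only [Finset.coe_filter, Finset.mem_product, Set.mem_ofPred_eq] at ha hb
    have h1 : a.1 = b.1 := hsep q hq a.1 ha.1.1 b.1 hb.1.1 a.2 ha.2 b.2 hb.2 hab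
    rw [h1] at hab
    exact Prod.ext h1 (mul_left_cancel hab)
  refine lp.norm_le_of_forall_sum_norm_sq_le (by positivity) fun t => ?_
  calc ∑ x ∈ t, ‖v x‖ ^ 2
      ≤ ∑ x ∈ t, ∑ q ∈ s, ‖c q‖ ^ 2 *
          ∑ p ∈ s with x ∈ D p ∧ x ∈ D q, ‖ξ ((g p)⁻¹ * x)‖ ^ 2 :=
        Finset.sum_le_sum fun x _ => hpt x
    _ = ∑ q ∈ s, ‖c q‖ ^ 2 *
          ∑ x ∈ t, ∑ p ∈ s with x ∈ D p ∧ x ∈ D q, ‖ξ ((g p)⁻¹ * x)‖ ^ 2 := by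
        rw [Finset.sum_comm]
        simp_rw [Finset.mul_sum]
    _ ≤ ∑ q ∈ s, ‖c q‖ ^ 2 * ‖ξ‖ ^ 2 :=
        Finset.sum_le_sum fun q hq => by gcongr; exact hinj q hq t
    _ = (√(∑ p ∈ s, ‖c p‖ ^ 2) * ‖ξ‖) ^ 2 := by
        rw [mul_pow, Real.sq_sqrt (by positivity), Finset.sum_mul]

namespace FreeGroup

theorem isReduced_cons {a : α × Bool} {L : List (α × Bool)} (hL : IsReduced L)
    (ha : ¬ [(a.1, !a.2)] <+: L) : IsReduced (a :: L) := by
  cases L with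
  | nil => exact .singleton
  | cons b L =>
    refine isReduced_cons_cons.2 ⟨fun h => ?_, hL⟩
    simp only [List.cons_prefix_cons, List.nil_prefix, and_true] at ha
    cases a; cases b
    simp_all

theorem inv_of_mul_inv_of_mul (i j : α) (x : FreeGroup α) :
    (of i * (of j)⁻¹)⁻¹ * x = of j * (of i)⁻¹ * x := by
  rw [mul_inv_rev, inv_inv]

variable [DecidableEq α]

def cylinder (u : List (α × Bool)) : Set (FreeGroup α) :=
  {x | u <+: x.toWord}

theorem eq_of_mem_cylinder {u v : List (α × Bool)} {x : FreeGroup α} (hu : x ∈ cylinder u)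
    (hv : x ∈ cylinder v) (huv : u.length = v.length) : u = v :=
  (List.prefix_of_prefix_length_le hu hv huv.le).eq_of_length huv

theorem cylinder_subset_cylinder {u v : List (α × Bool)} (h : u <+: v) :
    cylinder v ⊆ cylinder u :=
  fun _ hx => h.trans hx

theorem toWord_inv_of (a : α) : (of a)⁻¹.toWord = [(a, false)] := by
  simp [toWord_inv, invRev]

theorem toWord_mul_of_isReduced {x y : FreeGroup α} (h : IsReduced (x.toWord ++ y.toWord)) :
    (x * y).toWord = x.toWord ++ y.toWord := by
  rw [toWord_mul, h.reduce_eq]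

theorem toWord_mul_of_toWord_eq_invRev_append {x y : FreeGroup α} {L : List (α × Bool)}
    (h : y.toWord = invRev x.toWord ++ L) : (x * y).toWord = L := by
  have hy : y = x⁻¹ * mk L := by
    rw [← mk_toWord (x := y), h, ← mul_mk, ← inv_mk, mk_toWord]
  rw [hy, mul_inv_cancel_left, toWord_mk]
  exact (isReduced_toWord.infix (h ▸ List.suffix_append _ _).isInfix).reduce_eq

theorem toWord_of_mul_inv_of_mul_of_notMem_cylinder {i j : α} (hij : i ≠ j) {x : FreeGroup α}
    (hx : x ∉ cylinder [(i, true)]) :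
    (of j * (of i)⁻¹ * x).toWord = (j, true) :: (i, false) :: x.toWord := by
  have hred : IsReduced ((i, false) :: x.toWord) := isReduced_cons isReduced_toWord hx
  have hinv : ((of i)⁻¹ * x).toWord = (i, false) :: x.toWord := by
    rw [toWord_mul_of_isReduced (by rwa [toWord_inv_of]), toWord_inv_of, List.singleton_append]
  have hred' : IsReduced ((of j).toWord ++ ((of i)⁻¹ * x).toWord) := by
    rw [toWord_of, hinv]
    exact isReduced_cons hred (by simpa using hij.symm)
  rw [mul_assoc, toWord_mul_of_isReduced hred', toWord_of, hinv, List.singleton_append]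

theorem toWord_of_mul_inv_of_mul_of_mem_cylinder_diff {i j : α} {x : FreeGroup α}
    (hx : x ∈ cylinder [(i, true)] \ cylinder [(i, true), (j, false)]) :
    (of j * (of i)⁻¹ * x).toWord = (j, true) :: x.toWord.tail := by
  obtain ⟨⟨L, hL⟩, hx2⟩ := hx
  have hw : x.toWord = (i, true) :: L := hL.symm
  have hinv : ((of i)⁻¹ * x).toWord = L :=
    toWord_mul_of_toWord_eq_invRev_append (by rw [hw, toWord_inv_of]; rfl)
  have hred : IsReduced L := isReduced_toWord.infix (hw ▸ List.suffix_cons _ _).isInfix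
  have hj : ¬ [(j, false)] <+: L := fun h =>
    hx2 (show [(i, true), (j, false)] <+: x.toWord from hw ▸ List.cons_prefix_cons.2 ⟨rfl, h⟩)
  have hred' : IsReduced ((of j).toWord ++ ((of i)⁻¹ * x).toWord) := by
    rw [toWord_of, hinv]
    exact isReduced_cons hred hj
  rw [mul_assoc, toWord_mul_of_isReduced hred', toWord_of, hinv, hw, List.tail_cons,
    List.singleton_append]

theorem eq_of_inv_mul_eq_of_notMem_cylinder {p p' : α × α} (hp : p.1 ≠ p.2) (hp' : p'.1 ≠ p'.2)
    {x x' : FreeGroup α} (hx : x ∉ cylinder [(p.1, true)]) (hx' : x' ∉ cylinder [(p'.1, true)])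
    (h : (of p.1 * (of p.2)⁻¹)⁻¹ * x = (of p'.1 * (of p'.2)⁻¹)⁻¹ * x') : p = p' := by
  have hw := congrArg toWord h
  rw [inv_of_mul_inv_of_mul, inv_of_mul_inv_of_mul,
    toWord_of_mul_inv_of_mul_of_notMem_cylinder hp hx,
    toWord_of_mul_inv_of_mul_of_notMem_cylinder hp' hx'] at hw
  simp only [List.cons.injEq, Prod.mk.injEq, and_true] at hw
  exact Prod.ext hw.2.1 hw.1

theorem eq_of_inv_mul_eq_of_mem_cylinder_diff {p p' q : α × α} {x x' : FreeGroup α}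
    (hx : x ∈ cylinder [(p.1, true)] \ cylinder [(p.1, true), (p.2, false)])
    (hx' : x' ∈ cylinder [(p'.1, true)] \ cylinder [(p'.1, true), (p'.2, false)])
    (hxq : x ∈ cylinder [(q.1, true)]) (hxq' : x' ∈ cylinder [(q.1, true)])
    (h : (of p.1 * (of p.2)⁻¹)⁻¹ * x = (of p'.1 * (of p'.2)⁻¹)⁻¹ * x') : p = p' := by
  have h₁ : p.1 = q.1 := by simpa using eq_of_mem_cylinder hx.1 hxq rfl
  have h₁' : p'.1 = q.1 := by simpa using eq_of_mem_cylinder hx'.1 hxq' rfl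
  have hw := congrArg toWord h
  rw [inv_of_mul_inv_of_mul, inv_of_mul_inv_of_mul,
    toWord_of_mul_inv_of_mul_of_mem_cylinder_diff hx,
    toWord_of_mul_inv_of_mul_of_mem_cylinder_diff hx'] at hw
  simp only [List.cons.injEq, Prod.mk.injEq, and_true] at hw
  exact Prod.ext (h₁.trans h₁'.symm) hw.1

theorem eq_of_mem_cylinder_pair {p q : α × α} {x : FreeGroup α}
    (hp : x ∈ cylinder [(p.1, true), (p.2, false)])
    (hq : x ∈ cylinder [(q.1, true), (q.2, false)]) : p = q := by
  have h := eq_of_mem_cylinder hp hq rfl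
  simp only [List.cons.injEq, Prod.mk.injEq, and_true] at h
  exact Prod.ext h.1 h.2

theorem norm_sum_offDiag_smul_lam_le (s : Finset α) (c : α × α → ℂ) :
    ‖∑ p ∈ s.offDiag, c p • lam (of p.1 * (of p.2)⁻¹)‖ ≤
      3 * √(∑ p ∈ s.offDiag, ‖c p‖ ^ 2) := by
  refine ContinuousLinearMap.opNorm_le_bound _ (by positivity) fun ξ => ?_
  set g : α × α → FreeGroup α := fun p => of p.1 * (of p.2)⁻¹
  set C := √(∑ p ∈ s.offDiag, ‖c p‖ ^ 2)
  set D₁ : α × α → Set (FreeGroup α) := fun p => cylinder [(p.1, true)]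
  set D₂ : α × α → Set (FreeGroup α) := fun p => cylinder [(p.1, true), (p.2, false)]
  have hsplit : (∑ p ∈ s.offDiag, c p • lam (g p)) ξ =
      ∑ p ∈ s.offDiag, c p • lp.indicator (D₁ p)ᶜ (lam (g p) ξ) +
      ∑ p ∈ s.offDiag, c p • lp.indicator (D₁ p \ D₂ p) (lam (g p) ξ) +
      ∑ p ∈ s.offDiag, c p • lp.indicator (D₂ p) (lam (g p) ξ) := by
    simp only [sum_apply, smul_apply, ← Finset.sum_add_distrib, ← smul_add]
    refine Finset.sum_congr rfl fun p _ => ?_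
    rw [lp.indicator_compl_add_indicator_diff_add_indicator
      (show D₂ p ⊆ D₁ p from cylinder_subset_cylinder (List.prefix_append _ _))]
  have h₀ := norm_sum_smul_indicator_lam_le s.offDiag c g (fun p => (D₁ p)ᶜ)
    (fun _ _ _ hp _ hp' _ hx _ hx' h => eq_of_inv_mul_eq_of_notMem_cylinder
      (Finset.mem_offDiag.1 hp).2.2 (Finset.mem_offDiag.1 hp').2.2 hx.1 hx'.1 h) ξ
  have h₁ := norm_sum_smul_indicator_lam_le s.offDiag c g (fun p => D₁ p \ D₂ p)
    (fun _ _ _ _ _ _ _ hx _ hx' h =>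
      eq_of_inv_mul_eq_of_mem_cylinder_diff hx.1 hx'.1 hx.2.1 hx'.2.1 h) ξ
  have h₂ := norm_sum_smul_indicator_lam_le s.offDiag c g D₂
    (fun _ _ _ _ _ _ _ hx _ hx' _ =>
      (eq_of_mem_cylinder_pair hx.1 hx.2).trans (eq_of_mem_cylinder_pair hx'.1 hx'.2).symm) ξ
  rw [hsplit]
  calc _ ≤ _ := norm_add₃_le
    _ ≤ C * ‖ξ‖ + C * ‖ξ‖ + C * ‖ξ‖ := by gcongr
    _ = 3 * C * ‖ξ‖ := by ring

end FreeGroup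

theorem haagerup_bound_on_generator_pairs_general {k : ℕ}
    (A : Matrix (Fin k) (Fin k) ℂ) :
    (k : ℝ)⁻¹ * ‖∑ i : Fin k, ∑ j : Fin k,
        A i j • lam (FreeGroup.of i * (FreeGroup.of j)⁻¹)‖ ≤
      (k : ℝ)⁻¹ * ‖A.trace‖ +
        (3 / k) * Real.sqrt (∑ i : Fin k, ∑ j : Fin k,
          if i ≠ j then ‖A i j‖ ^ 2 else 0) := by
  have hS : ∑ i : Fin k, ∑ j : Fin k, A i j • lam (FreeGroup.of i * (FreeGroup.of j)⁻¹) =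
      A.trace • ContinuousLinearMap.id ℂ _ +
        ∑ p ∈ Finset.univ.offDiag, A p.1 p.2 • lam (FreeGroup.of p.1 * (FreeGroup.of p.2)⁻¹) := by
    rw [Finset.sum_sum_eq_sum_add_sum_offDiag]
    simp only [mul_inv_cancel, lam_one, Matrix.trace, Matrix.diag, Finset.sum_smul]
  have hσ : ∑ i : Fin k, ∑ j : Fin k, (if i ≠ j then ‖A i j‖ ^ 2 else 0) =
      ∑ p ∈ Finset.univ.offDiag, ‖A p.1 p.2‖ ^ 2 := by
    rw [Finset.sum_sum_eq_sum_add_sum_offDiag]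
    simp only [ne_eq, not_true_eq_false, if_false, Finset.sum_const_zero, zero_add]
    exact Finset.sum_congr rfl fun p hp => if_pos (Finset.mem_offDiag.1 hp).2.2
  have hnorm : ‖∑ i : Fin k, ∑ j : Fin k, A i j • lam (FreeGroup.of i * (FreeGroup.of j)⁻¹)‖ ≤
      ‖A.trace‖ + 3 * √(∑ p ∈ Finset.univ.offDiag, ‖A p.1 p.2‖ ^ 2) := by
    rw [hS]
    refine (norm_add_le _ _).trans (add_le_add ?_ (FreeGroup.norm_sum_offDiag_smul_lam_le _ _))
    exact (ContinuousLinearMap.opNorm_smul_le _ _).trans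
      (mul_le_of_le_one_right (norm_nonneg _) ContinuousLinearMap.norm_id_le)
  rw [hσ]
  calc _ ≤ (k : ℝ)⁻¹ * (‖A.trace‖ + 3 * √(∑ p ∈ Finset.univ.offDiag, ‖A p.1 p.2‖ ^ 2)) := by
        gcongr
    _ = _ := by ring

/-- For any matrix `A ∈ M_k(ℂ)`, the operator norm of
`k⁻¹ ∑_{i,j} a_{ij} λ(gᵢ gⱼ⁻¹)` (where `g₁, …, g_k` are the free generators of `F_k`
and `λ` is the left regular representation on `ℓ²(F_k)`) is bounded by
`k⁻¹ |Tr A| + (3/k) (∑_{i≠j} |a_{ij}|²)^{1/2}`. -/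
theorem haagerup_bound_on_generator_pairs {k : ℕ} (hk : 1 ≤ k)
    (A : Matrix (Fin k) (Fin k) ℂ) :
    (k : ℝ)⁻¹ * ‖∑ i : Fin k, ∑ j : Fin k,
        A i j • lam (FreeGroup.of i * (FreeGroup.of j)⁻¹)‖ ≤
      (k : ℝ)⁻¹ * ‖A.trace‖ +
        (3 / k) * Real.sqrt (∑ i : Fin k, ∑ j : Fin k,
          if i ≠ j then ‖A i j‖ ^ 2 else 0) :=
  haagerup_bound_on_generator_pairs_general A
end
end

section
/- Let U_1, …, U_k be n×n unitary matrices and Φ_{k,n}(X)_{ij} = k^{-1} Tr(U_i X U_j^*). For every density matrix X ∈ D(ℂ^n) there exists a Hermitian matrix A = (a_{ij}) ∈ M_k(ℂ) with Tr A = 0 and ‖A‖₂ ≤ 1 such that ‖Φ_{k,n}(X) − I_k/k‖₂ ≤ k^{-1} ‖Σ_{i,j=1}^k a_{ij} U_i^* U_j‖, where ‖·‖₂ denotes the Frobenius norm and ‖·‖ the operator norm. -/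
open Matrix
open scoped Kronecker ComplexOrder

noncomputable section

/-- A density matrix: positive semidefinite with trace one. -/
def IsDensity {ι : Type*} [Fintype ι] (X : Matrix ι ι ℂ) : Prop :=
  X.PosSemidef ∧ X.trace = 1

/-- The Frobenius (Hilbert–Schmidt) norm of a matrix. -/
def frobNorm {ι κ : Type*} [Fintype ι] [Fintype κ] (A : Matrix ι κ ℂ) : ℝ :=
  Real.sqrt (∑ i, ∑ j, ‖A i j‖ ^ 2)

/-- The operator norm of a matrix acting on the standard Hermitian space `ℂ^ι`. -/
def opNorm {ι : Type*} [Fintype ι] [DecidableEq ι] (A : Matrix ι ι ℂ) : ℝ :=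
  ‖Matrix.toEuclideanCLM (𝕜 := ℂ) A‖

/-- The von Neumann entropy of a (Hermitian) matrix, `-∑ᵢ λᵢ log λᵢ`. -/
def vonNeumannEntropy {ι : Type*} [Fintype ι] [DecidableEq ι] (X : Matrix ι ι ℂ) : ℝ :=
  if h : X.IsHermitian then -∑ i, h.eigenvalues i * Real.log (h.eigenvalues i) else 0

/-- The minimum output entropy of a channel. -/
def Hmin {ι κ : Type*} [Fintype ι] [Fintype κ] [DecidableEq κ]
    (Φ : Matrix ι ι ℂ → Matrix κ κ ℂ) : ℝ :=
  sInf {h : ℝ | ∃ X : Matrix ι ι ℂ, IsDensity X ∧ h = vonNeumannEntropy (Φ X)}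

/-- The channel `Φ_{k,n}(X)_{ij} = k⁻¹ Tr(Uᵢ X Uⱼ*)` associated to a `k`-tuple of
`n × n` (unitary) matrices. -/
def channel {n k : ℕ} (U : Fin k → Matrix (Fin n) (Fin n) ℂ)
    (X : Matrix (Fin n) (Fin n) ℂ) : Matrix (Fin k) (Fin k) ℂ :=
  Matrix.of fun i j => (k : ℂ)⁻¹ * (U i * X * (U j)ᴴ).trace

/-- Entrywise complex conjugation of a matrix. -/
def conjMat {ι κ : Type*} (A : Matrix ι κ ℂ) : Matrix ι κ ℂ :=
  A.map (starRingEnd ℂ)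

/-- The tensor product channel `Φ_{k,n} ⊗ Φ̄_{k,n}`, acting on
`M_{n²}(ℂ) ≅ M_n(ℂ) ⊗ M_n(ℂ)` with values in `M_{k²}(ℂ)`. -/
def channelTensorConj {n k : ℕ} (U : Fin k → Matrix (Fin n) (Fin n) ℂ)
    (X : Matrix (Fin n × Fin n) (Fin n × Fin n) ℂ) :
    Matrix (Fin k × Fin k) (Fin k × Fin k) ℂ :=
  Matrix.of fun p q =>
    ((k : ℂ) ^ 2)⁻¹ *
      ((U p.1 ⊗ₖ conjMat (U p.2)) * X * ((U q.1 ⊗ₖ conjMat (U q.2)))ᴴ).trace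

end

open MeasureTheory ProbabilityTheory Filter

noncomputable instance matrixMeasurableSpace {m n : Type*} :
    MeasurableSpace (Matrix m n ℂ) :=
  inferInstanceAs (MeasurableSpace (m → n → ℂ))


/-! The matrix `B = Φ(X) − I/k` is Hermitian and traceless, so `A = B / ‖B‖₂` is admissible and
`‖B‖₂ = Tr(AB)`. Since `Tr A = 0`, `Tr(AB) = Tr(AΦ(X)) = k⁻¹ Tr(MX)` with `M = ∑ aᵢⱼ Uᵢ* Uⱼ`, and
`|Tr(MX)| ≤ ‖M‖` because writing `X = C*C` turns `Tr(MX)` into `∑ᵢ ⟨cᵢ, M cᵢ⟩`, where the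
`cᵢ` satisfy `∑ᵢ ‖cᵢ‖² = Tr X = 1`. -/

section FrobeniusNorm

variable {ι κ : Type*} [Fintype ι] [Fintype κ]

lemma frobNorm_nonneg (A : Matrix ι κ ℂ) : 0 ≤ frobNorm A :=
  Real.sqrt_nonneg _

lemma frobNorm_sq (A : Matrix ι κ ℂ) : frobNorm A ^ 2 = ∑ i, ∑ j, ‖A i j‖ ^ 2 :=
  Real.sq_sqrt (by positivity)

lemma frobNorm_smul (c : ℂ) (A : Matrix ι κ ℂ) : frobNorm (c • A) = ‖c‖ * frobNorm A := by
  simp only [frobNorm, Matrix.smul_apply, smul_eq_mul, norm_mul, mul_pow, ← Finset.mul_sum]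
  rw [Real.sqrt_mul (by positivity), Real.sqrt_sq (norm_nonneg c)]

lemma trace_mul_conjTranspose_self (A : Matrix ι κ ℂ) :
    (A * Aᴴ).trace = ((frobNorm A ^ 2 : ℝ) : ℂ) := by
  simp only [frobNorm_sq, trace, diag, mul_apply, conjTranspose_apply, Complex.ofReal_sum,
    Complex.ofReal_pow, ← Complex.mul_conj', RCLike.star_def]

end FrobeniusNorm

section OperatorNorm

variable {ι : Type*} [Fintype ι] [DecidableEq ι]

lemma norm_star_dotProduct_mulVec_le (M : Matrix ι ι ℂ) (v : ι → ℂ) :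
    ‖star v ⬝ᵥ M *ᵥ v‖ ≤ opNorm M * ‖WithLp.toLp 2 v‖ ^ 2 := by
  set x : EuclideanSpace ℂ ι := WithLp.toLp 2 v
  set T := toEuclideanCLM (𝕜 := ℂ) M
  have h : star v ⬝ᵥ M *ᵥ v = inner ℂ x (T x) := by
    rw [toEuclideanCLM_toLp, EuclideanSpace.inner_toLp_toLp, dotProduct_comm]
  calc ‖star v ⬝ᵥ M *ᵥ v‖ ≤ ‖x‖ * ‖T x‖ := h ▸ norm_inner_le_norm _ _
    _ ≤ ‖x‖ * (‖T‖ * ‖x‖) := by gcongr; exact T.le_opNorm x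
    _ = opNorm M * ‖x‖ ^ 2 := by rw [opNorm]; ring

lemma norm_trace_mul_le_opNorm_mul_re_trace (M : Matrix ι ι ℂ) {X : Matrix ι ι ℂ}
    (hX : X.PosSemidef) : ‖(M * X).trace‖ ≤ opNorm M * X.trace.re := by
  obtain ⟨C, rfl⟩ := by
    open scoped MatrixOrder in
    exact CStarAlgebra.nonneg_iff_eq_star_mul_self.mp hX.nonneg
  have hrow : ∀ i, ‖WithLp.toLp 2 (star (C i))‖ ^ 2 = ∑ j, ‖C i j‖ ^ 2 := fun i => by
    simp [EuclideanSpace.norm_sq_eq]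
  have htrace : (star C * C).trace.re = ∑ i, ‖WithLp.toLp 2 (star (C i))‖ ^ 2 := by
    rw [star_eq_conjTranspose, trace_mul_comm, trace_mul_conjTranspose_self, Complex.ofReal_re,
      frobNorm_sq]
    simp only [hrow]
  calc ‖(M * (star C * C)).trace‖ = ‖∑ i, star (star (C i)) ⬝ᵥ M *ᵥ star (C i)‖ := by
        rw [← mul_assoc, trace_mul_comm, ← mul_assoc, trace]
        simp only [diag, mul_mul_apply, star_star, star_eq_conjTranspose]
        rfl
    _ ≤ ∑ i, opNorm M * ‖WithLp.toLp 2 (star (C i))‖ ^ 2 :=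
        (norm_sum_le _ _).trans (Finset.sum_le_sum fun i _ => norm_star_dotProduct_mulVec_le M _)
    _ = opNorm M * (star C * C).trace.re := by rw [htrace, Finset.mul_sum]

end OperatorNorm

lemma exists_isHermitian_trace_mul_eq_frobNorm {ι : Type*} [Fintype ι] {B : Matrix ι ι ℂ}
    (hB : B.IsHermitian) (htr : B.trace = 0) :
    ∃ A : Matrix ι ι ℂ, A.IsHermitian ∧ A.trace = 0 ∧ frobNorm A ≤ 1 ∧
      (A * B).trace = frobNorm B := by
  -- `0⁻¹ = 0`, so this choice also covers `B = 0`.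
  refine ⟨((frobNorm B : ℂ)⁻¹) • B, hB.smul (by simp [IsSelfAdjoint, Complex.conj_ofReal]), ?_,
    ?_, ?_⟩
  · rw [trace_smul, htr, smul_zero]
  · rw [frobNorm_smul, norm_inv, Complex.norm_real, Real.norm_of_nonneg (frobNorm_nonneg B)]
    exact inv_mul_le_one
  · have hBB : (B * B).trace = ((frobNorm B ^ 2 : ℝ) : ℂ) := by
      simpa only [hB.eq] using trace_mul_conjTranspose_self B
    rw [smul_mul, trace_smul, hBB, smul_eq_mul, Complex.ofReal_pow, sq, ← mul_assoc,
      inv_mul_mul_self]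

section Channel

variable {n k : ℕ} (U : Fin k → Matrix (Fin n) (Fin n) ℂ)

lemma channel_isHermitian {X : Matrix (Fin n) (Fin n) ℂ} (hX : X.IsHermitian) :
    (channel U X).IsHermitian := by
  ext i j
  simp only [conjTranspose_apply, channel, of_apply, star_mul', ← trace_conjTranspose,
    conjTranspose_mul, conjTranspose_conjTranspose, hX.eq, mul_assoc, star_inv₀, star_natCast]

lemma trace_channel_sub_smul_one (hU : ∀ i, U i ∈ unitaryGroup (Fin n) ℂ)
    {X : Matrix (Fin n) (Fin n) ℂ} (hX : X.trace = 1) :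
    (channel U X - (k : ℂ)⁻¹ • (1 : Matrix (Fin k) (Fin k) ℂ)).trace = 0 := by
  have hdiag : ∀ i, channel U X i i = (k : ℂ)⁻¹ := fun i => by
    rw [channel, of_apply, trace_mul_cycle, ← star_eq_conjTranspose, (hU i).1, one_mul, hX,
      mul_one]
  simp [trace, hdiag]

lemma trace_mul_channel (A : Matrix (Fin k) (Fin k) ℂ) (X : Matrix (Fin n) (Fin n) ℂ) :
    (A * channel U X).trace = (k : ℂ)⁻¹ * ((∑ i, ∑ j, A i j • ((U i)ᴴ * U j)) * X).trace := by
  have hlhs : (A * channel U X).trace = ∑ i, ∑ j, A i j * channel U X j i := by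
    simp only [trace, diag, mul_apply]
  rw [hlhs]
  simp only [Finset.sum_mul, trace_sum, smul_mul, trace_smul, smul_eq_mul, Finset.mul_sum,
    channel, of_apply, trace_mul_cycle (U _), mul_left_comm]

end Channel

theorem exists_dual_matrix_general {n k : ℕ}
    (U : Fin k → Matrix (Fin n) (Fin n) ℂ)
    (hU : ∀ i, U i ∈ Matrix.unitaryGroup (Fin n) ℂ)
    (X : Matrix (Fin n) (Fin n) ℂ) (hX : IsDensity X) :
    ∃ A : Matrix (Fin k) (Fin k) ℂ, A.IsHermitian ∧ A.trace = 0 ∧ frobNorm A ≤ 1 ∧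
      frobNorm (channel U X - (k : ℂ)⁻¹ • (1 : Matrix (Fin k) (Fin k) ℂ)) ≤
        (k : ℝ)⁻¹ * opNorm (∑ i : Fin k, ∑ j : Fin k, A i j • ((U i)ᴴ * U j)) := by
  set B := channel U X - (k : ℂ)⁻¹ • (1 : Matrix (Fin k) (Fin k) ℂ)
  have hB : B.IsHermitian :=
    (channel_isHermitian U hX.1.isHermitian).sub (isHermitian_one.smul (by simp [IsSelfAdjoint]))
  obtain ⟨A, hA, hAtr, hAnorm, hAB⟩ :=
    exists_isHermitian_trace_mul_eq_frobNorm hB (trace_channel_sub_smul_one U hU hX.2)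
  refine ⟨A, hA, hAtr, hAnorm, ?_⟩
  calc frobNorm B = ‖(A * B).trace‖ := by
        rw [hAB, Complex.norm_real, Real.norm_of_nonneg (frobNorm_nonneg B)]
    _ = (k : ℝ)⁻¹ * ‖((∑ i, ∑ j, A i j • ((U i)ᴴ * U j)) * X).trace‖ := by
        rw [mul_sub, trace_sub, Matrix.mul_smul, mul_one, trace_smul, hAtr, smul_zero, sub_zero,
          trace_mul_channel, norm_mul, norm_inv, Complex.norm_natCast]
    _ ≤ (k : ℝ)⁻¹ * opNorm (∑ i, ∑ j, A i j • ((U i)ᴴ * U j)) := by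
        gcongr
        simpa [hX.2] using norm_trace_mul_le_opNorm_mul_re_trace _ hX.1

/-- For every density matrix `X` there is a traceless Hermitian matrix `A` with
`‖A‖₂ ≤ 1` such that `‖Φ_{k,n}(X) − I_k/k‖₂ ≤ k⁻¹ ‖∑_{i,j} a_{ij} Uᵢ* Uⱼ‖`. -/
theorem exists_dual_matrix {n k : ℕ} (hk : 1 ≤ k)
    (U : Fin k → Matrix (Fin n) (Fin n) ℂ)
    (hU : ∀ i, U i ∈ Matrix.unitaryGroup (Fin n) ℂ)
    (X : Matrix (Fin n) (Fin n) ℂ) (hX : IsDensity X) :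
    ∃ A : Matrix (Fin k) (Fin k) ℂ, A.IsHermitian ∧ A.trace = 0 ∧ frobNorm A ≤ 1 ∧
      frobNorm (channel U X - (k : ℂ)⁻¹ • (1 : Matrix (Fin k) (Fin k) ℂ)) ≤
        (k : ℝ)⁻¹ * opNorm (∑ i : Fin k, ∑ j : Fin k, A i j • ((U i)ᴴ * U j)) :=
  exists_dual_matrix_general U hU X hX
end

section
/- Let U_1, …, U_k be n×n unitary matrices, let Φ_{k,n}(X)_{ij} = k^{-1} Tr(U_i X U_j^*) and let the conjugate channel be Φ̄_{k,n}(X)_{ij} = k^{-1} Tr(Ū_i X Ū_j^*), where Ū denotes entrywise complex conjugation. Let β_n = n^{-1/2} Σ_{a=1}^n e_a ⊗ e_a ∈ ℂ^n ⊗ ℂ^n and β_k = k^{-1/2} Σ_{i=1}^k f_i ⊗ f_i ∈ ℂ^k ⊗ ℂ^k be the maximally entangled unit vectors. Then ⟨β_k, (Φ_{k,n} ⊗ Φ̄_{k,n})(β_n β_n^*) β_k⟩ = 1/k, where (Φ ⊗ Φ̄)(X)_{(i,i'),(j,j')} = k^{-2} Tr((U_i ⊗ Ū_{i'}) X (U_j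 ⊗ Ū_{j'})^*) for X ∈ M_{n²}(ℂ) ≅ M_n(ℂ) ⊗ M_n(ℂ). -/
/-!
Writing `β_d = vec (d^{-1/2} • 1)`, the identity `(A ⊗ B) vec X = vec (B X Aᵀ)` gives
`(U ⊗ Ū) β_n = vec (n^{-1/2} • (U Uᴴ)ᵀ) = β_n` for unitary `U`. Hence the entry of
`(Φ ⊗ Φ̄)(β_n β_n*)` at `((i,i),(j,j))` is `k⁻² ⟨β_n, β_n⟩ = k⁻²`. For any matrix `M`,
`⟨β_k, M β_k⟩` is `k⁻¹` times the sum of exactly these `k²` diagonal-block entries of `M`.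
-/

open Matrix
open scoped Kronecker ComplexOrder

open MeasureTheory ProbabilityTheory Filter

/-- The maximally entangled unit vector `d^{-1/2} ∑ₐ eₐ ⊗ eₐ ∈ ℂ^d ⊗ ℂ^d`. -/
noncomputable def bell (d : ℕ) : Fin d × Fin d → ℂ := fun p =>
  if p.1 = p.2 then (Real.sqrt d : ℂ)⁻¹ else 0

lemma inv_sqrt_mul_inv_sqrt (d : ℕ) :
    (Real.sqrt d : ℂ)⁻¹ * (Real.sqrt d : ℂ)⁻¹ = (d : ℂ)⁻¹ := by
  rw [← mul_inv, ← Complex.ofReal_mul, Real.mul_self_sqrt (Nat.cast_nonneg d),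
    Complex.ofReal_natCast]

lemma star_bell (d : ℕ) : star (bell d) = bell d := by
  funext p
  simp only [Pi.star_apply, bell]
  split_ifs <;> simp [← Complex.ofReal_inv]

lemma bell_eq_vec (d : ℕ) :
    bell d = vec ((Real.sqrt d : ℂ)⁻¹ • (1 : Matrix (Fin d) (Fin d) ℂ)) := by
  funext p
  simp [bell, one_apply, eq_comm]

lemma conjMat_mul_transpose {ι : Type*} [Fintype ι] (U : Matrix ι ι ℂ) :
    conjMat U * Uᵀ = (U * Uᴴ)ᵀ := by
  rw [transpose_mul]
  rfl

lemma kronecker_conjMat_mulVec_bell_of_mem_unitaryGroup {d : ℕ} {U : Matrix (Fin d) (Fin d) ℂ}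
    (hU : U ∈ unitaryGroup (Fin d) ℂ) : (U ⊗ₖ conjMat U) *ᵥ bell d = bell d := by
  rw [bell_eq_vec, kronecker_mulVec_vec, mul_smul_comm, mul_one, smul_mul_assoc,
    conjMat_mul_transpose, ← star_eq_conjTranspose, mem_unitaryGroup_iff.mp hU, transpose_one]

lemma star_bell_dotProduct_mulVec_bell {d : ℕ}
    (M : Matrix (Fin d × Fin d) (Fin d × Fin d) ℂ) :
    star (bell d) ⬝ᵥ M *ᵥ bell d = (d : ℂ)⁻¹ * ∑ i, ∑ j, M (i, i) (j, j) := by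
  rw [star_bell]
  simp only [dotProduct, bell, mulVec, mul_ite, mul_zero, Fintype.sum_prod_type,
    Finset.sum_ite_eq, Finset.mem_univ, ↓reduceIte, ← Finset.sum_mul, ite_mul, zero_mul,
    ← Finset.mul_sum]
  rw [← inv_sqrt_mul_inv_sqrt]
  ring

lemma bell_dotProduct_bell {d : ℕ} (hd : 0 < d) : bell d ⬝ᵥ bell d = 1 := by
  simp only [dotProduct, bell, mul_ite, ite_mul, inv_sqrt_mul_inv_sqrt, zero_mul, mul_zero,
    Fintype.sum_prod_type, Finset.sum_ite_eq, Finset.mem_univ, ↓reduceIte, Finset.sum_const,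
    Finset.card_univ, Fintype.card_fin, nsmul_eq_mul]
  exact mul_inv_cancel₀ (by positivity)

lemma trace_mul_vecMulVec_mul_conjTranspose {ι κ : Type*} [Fintype ι] [Fintype κ]
    (A B : Matrix κ ι ℂ) (v : ι → ℂ) :
    (A * vecMulVec v (star v) * Bᴴ).trace = (A *ᵥ v) ⬝ᵥ star (B *ᵥ v) := by
  rw [mul_vecMulVec, vecMulVec_mul, trace_vecMulVec, star_mulVec]

lemma channelTensorConj_bell_apply_diag {n k : ℕ} (hn : 0 < n)
    {U : Fin k → Matrix (Fin n) (Fin n) ℂ} (hU : ∀ i, U i ∈ unitaryGroup (Fin n) ℂ)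
    (i j : Fin k) :
    channelTensorConj U (vecMulVec (bell n) (star (bell n))) (i, i) (j, j) =
      ((k : ℂ) ^ 2)⁻¹ := by
  rw [channelTensorConj, of_apply, trace_mul_vecMulVec_mul_conjTranspose,
    kronecker_conjMat_mulVec_bell_of_mem_unitaryGroup (hU i),
    kronecker_conjMat_mulVec_bell_of_mem_unitaryGroup (hU j), star_bell,
    bell_dotProduct_bell hn, mul_one]

theorem bell_state_overlap_general {n k : ℕ} (hn : 1 ≤ n)
    (U : Fin k → Matrix (Fin n) (Fin n) ℂ)
    (hU : ∀ i, U i ∈ Matrix.unitaryGroup (Fin n) ℂ) :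
    star (bell k) ⬝ᵥ
        (channelTensorConj U (Matrix.vecMulVec (bell n) (star (bell n)))).mulVec (bell k) =
      (k : ℂ)⁻¹ := by
  rw [star_bell_dotProduct_mulVec_bell]
  simp only [channelTensorConj_bell_apply_diag hn hU, Finset.sum_const, Finset.card_univ,
    Fintype.card_fin, nsmul_eq_mul]
  rcases eq_or_ne (k : ℂ) 0 with hk | hk
  · simp [hk] -- for `k = 0` both sides are `0⁻¹ = 0`
  · field_simp

/-- `⟨β_k, (Φ_{k,n} ⊗ Φ̄_{k,n})(β_n β_n*) β_k⟩ = 1/k`. -/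
theorem bell_state_overlap {n k : ℕ} (hn : 1 ≤ n) (hk : 1 ≤ k)
    (U : Fin k → Matrix (Fin n) (Fin n) ℂ)
    (hU : ∀ i, U i ∈ Matrix.unitaryGroup (Fin n) ℂ) :
    star (bell k) ⬝ᵥ
        (channelTensorConj U (Matrix.vecMulVec (bell n) (star (bell n)))).mulVec (bell k) =
      (k : ℂ)⁻¹ :=
  bell_state_overlap_general hn U hU
end

section
/- For every k ≥ 1 and every density matrix X ∈ D(ℂ^k), one has log k − H(X) ≤ k · Tr((X − I_k/k)²), where H(X) is the von Neumann entropy of X and I_k/k is the maximally mixed state. -/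
/-!
Diagonalising `X`, both sides depend only on its spectrum `p`, a probability vector, and the
claim becomes `∑ pᵢ log (k pᵢ) ≤ k ∑ (pᵢ - 1/k)²`. Termwise `log (k pᵢ) ≤ k pᵢ - 1`, and
`∑ pᵢ (k pᵢ - 1) = k ∑ pᵢ² - 1 = k ∑ (pᵢ - 1/k)²` because `∑ pᵢ = 1`.
-/

open Matrix
open scoped Kronecker ComplexOrder

open MeasureTheory ProbabilityTheory Filter

namespace Matrix.IsHermitian

variable {n 𝕜 : Type*} [Fintype n] [DecidableEq n] [RCLike 𝕜] {A : Matrix n n 𝕜}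

lemma trace_cfc (hA : A.IsHermitian) (f : ℝ → ℝ) :
    (cfc f A).trace = ∑ i, (f (hA.eigenvalues i) : 𝕜) := by
  rw [hA.cfc_eq, IsHermitian.cfc, Unitary.conjStarAlgAut_apply, trace_mul_cycle,
    Unitary.coe_star_mul_self, one_mul, trace_diagonal]
  rfl

lemma trace_sub_smul_one_sq (hA : A.IsHermitian) (c : ℝ) :
    ((A - (c : 𝕜) • 1) ^ 2).trace = ∑ i, (((hA.eigenvalues i - c) ^ 2 : ℝ) : 𝕜) := by
  have hcfc : (A - (c : 𝕜) • 1) ^ 2 = cfc (fun x => (x - c) ^ 2) A := by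
    have := hA.isSelfAdjoint
    rw [cfc_pow (fun x => x - c) 2 A, cfc_sub (fun x => x) (fun _ => c) A, cfc_id' ℝ A,
      cfc_const c A, Algebra.algebraMap_eq_smul_one, RCLike.real_smul_eq_coe_smul (K := 𝕜)]
  rw [hcfc, hA.trace_cfc]

end Matrix.IsHermitian

lemma Real.mul_log_mul_le {c p : ℝ} (hc : 0 < c) (hp : 0 ≤ p) :
    p * Real.log (c * p) ≤ c * p ^ 2 - p := by
  rcases hp.eq_or_lt with rfl | hp
  · simp
  · nlinarith [mul_le_mul_of_nonneg_left (Real.log_le_sub_one_of_pos (mul_pos hc hp)) hp.le]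

lemma Fintype.card_pos_of_sum_eq_one {ι M : Type*} [Fintype ι] [AddCommMonoid M] [One M]
    [NeZero (1 : M)] {f : ι → M} (hsum : ∑ i, f i = 1) : 0 < Fintype.card ι :=
  Fintype.card_pos_iff.mpr <| Finset.univ_nonempty_iff.mp <|
    Finset.nonempty_of_sum_ne_zero (hsum ▸ one_ne_zero)

lemma card_mul_sum_sq_sub_inv_card {ι : Type*} [Fintype ι] {p : ι → ℝ}
    (hsum : ∑ i, p i = 1) :
    Fintype.card ι * ∑ i, (p i - (Fintype.card ι : ℝ)⁻¹) ^ 2 =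
      Fintype.card ι * ∑ i, p i ^ 2 - 1 := by
  have hn : (Fintype.card ι : ℝ) ≠ 0 :=
    Nat.cast_ne_zero.mpr (Fintype.card_pos_of_sum_eq_one hsum).ne'
  simp only [sub_sq, Finset.sum_add_distrib, Finset.sum_sub_distrib, ← Finset.sum_mul,
    ← Finset.mul_sum, hsum, Finset.sum_const, Finset.card_univ, nsmul_eq_mul]
  field_simp
  ring

theorem log_card_add_sum_mul_log_le {ι : Type*} [Fintype ι] {p : ι → ℝ} (hp : ∀ i, 0 ≤ p i)
    (hsum : ∑ i, p i = 1) :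
    Real.log (Fintype.card ι) + ∑ i, p i * Real.log (p i) ≤
      Fintype.card ι * ∑ i, (p i - (Fintype.card ι : ℝ)⁻¹) ^ 2 := by
  have hn : (0 : ℝ) < Fintype.card ι :=
    Nat.cast_pos.mpr (Fintype.card_pos_of_sum_eq_one hsum)
  calc Real.log (Fintype.card ι) + ∑ i, p i * Real.log (p i)
      = ∑ i, p i * Real.log (Fintype.card ι * p i) := by
        have hterm (i : ι) : p i * Real.log (Fintype.card ι * p i) =
            p i * Real.log (Fintype.card ι) + p i * Real.log (p i) := by
          rcases (hp i).eq_or_lt with h | h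
          · simp [← h]
          · rw [Real.log_mul hn.ne' h.ne', mul_add]
        simp only [hterm, Finset.sum_add_distrib, ← Finset.sum_mul, hsum, one_mul]
    _ ≤ ∑ i, (Fintype.card ι * p i ^ 2 - p i) :=
        Finset.sum_le_sum fun i _ => Real.mul_log_mul_le hn (hp i)
    _ = _ := by
        rw [card_mul_sum_sq_sub_inv_card hsum, Finset.sum_sub_distrib, Finset.mul_sum, hsum]

theorem entropy_defect_le_trace_sq_general {k : ℕ}
    (X : Matrix (Fin k) (Fin k) ℂ) (hX : IsDensity X) :
    Real.log k - vonNeumannEntropy X ≤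
      k * (((X - (k : ℂ)⁻¹ • (1 : Matrix (Fin k) (Fin k) ℂ)) ^ 2).trace).re := by
  obtain ⟨hpsd, htr⟩ := hX
  have hH : X.IsHermitian := hpsd.isHermitian
  have hsum : ∑ i, hH.eigenvalues i = 1 := by
    have h := hH.trace_eq_sum_eigenvalues.symm.trans htr
    rw [← RCLike.ofReal_sum, ← RCLike.ofReal_one, RCLike.ofReal_inj] at h
    exact h
  have hsq : ((X - (k : ℂ)⁻¹ • 1) ^ 2).trace =
      ((∑ i, (hH.eigenvalues i - (k : ℝ)⁻¹) ^ 2 : ℝ) : ℂ) := by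
    simpa using hH.trace_sub_smul_one_sq (k : ℝ)⁻¹
  rw [vonNeumannEntropy, dif_pos hH, sub_neg_eq_add, hsq, Complex.ofReal_re]
  simpa using log_card_add_sum_mul_log_le hpsd.eigenvalues_nonneg hsum

/-- For every density matrix `X ∈ D(ℂ^k)`,
`log k − H(X) ≤ k · Tr((X − I_k/k)²)`. -/
theorem entropy_defect_le_trace_sq {k : ℕ} (hk : 1 ≤ k)
    (X : Matrix (Fin k) (Fin k) ℂ) (hX : IsDensity X) :
    Real.log k - vonNeumannEntropy X ≤
      k * (((X - (k : ℂ)⁻¹ • (1 : Matrix (Fin k) (Fin k) ℂ)) ^ 2).trace).re :=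
  entropy_defect_le_trace_sq_general X hX
end

section
/- Let d ≥ 2 and let ρ ∈ D(ℂ^d) be a density matrix such that ⟨v, ρ v⟩ ≥ λ for some unit vector v ∈ ℂ^d and some λ with 1/d ≤ λ < 1. Then the von Neumann entropy of ρ satisfies H(ρ) ≤ −λ log λ + (1−λ) log((d−1)/(1−λ)). -/
open Matrix
open scoped Kronecker ComplexOrder

open MeasureTheory ProbabilityTheory Filter

/-!
If `⟨v, ρ v⟩ ≥ λ` for a unit vector `v`, then, expanding `v` in an eigenbasis of `ρ`, the
quadratic form is a convex combination of eigenvalues, so some eigenvalue `μ` of `ρ` is at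
least `λ`. Jensen's inequality for `-t log t` on the remaining `d - 1` eigenvalues, which sum to
`1 - μ`, bounds `H(ρ)` by the `d`-ary entropy `h_d(1 - μ)`. Since `h_d` increases on
`[0, 1 - 1/d]` and `1 - μ ≤ 1 - λ ≤ 1 - 1/d`, we get `H(ρ) ≤ h_d(1 - λ)`, which is the claimed
bound.
-/

open Real Finset

lemma Finset.sum_negMulLog_le {ι : Type*} (s : Finset ι) {p : ι → ℝ} (hp : ∀ i ∈ s, 0 ≤ p i) :
    ∑ i ∈ s, negMulLog (p i) ≤ negMulLog (∑ i ∈ s, p i) + (∑ i ∈ s, p i) * log #s := by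
  rcases s.eq_empty_or_nonempty with rfl | hs
  · simp
  have hc : (0 : ℝ) < #s := by exact_mod_cast hs.card_pos
  have jensen := concaveOn_negMulLog.le_map_sum (t := s) (w := fun _ ↦ (#s : ℝ)⁻¹) (p := p)
    (fun _ _ ↦ by positivity) (by simp [hc.ne']) hp
  have hlog : negMulLog (#s : ℝ)⁻¹ = (#s : ℝ)⁻¹ * log #s := by simp [negMulLog, log_inv]
  simp only [smul_eq_mul, ← Finset.mul_sum, negMulLog_mul, hlog,
    mul_comm (#s : ℝ)⁻¹ (∑ i ∈ s, p i)] at jensen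
  have := mul_le_mul_of_nonneg_left jensen hc.le
  field_simp at this
  linarith

lemma sum_negMulLog_le_qaryEntropy {ι : Type*} [Fintype ι] {p : ι → ℝ} (hp : ∀ i, 0 ≤ p i)
    (hp₁ : ∑ i, p i = 1) (j : ι) :
    ∑ i, negMulLog (p i) ≤ qaryEntropy (Fintype.card ι) (1 - p j) := by
  classical
  have hrest : ∑ i ∈ univ.erase j, p i = 1 - p j := by
    rw [← hp₁, ← add_sum_erase _ _ (mem_univ j), add_sub_cancel_left]
  have hcard : (#(univ.erase j) : ℝ) = ((Fintype.card ι - 1 : ℤ) : ℝ) := by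
    rw [card_erase_of_mem (mem_univ j), card_univ, Nat.cast_sub (Fintype.card_pos_iff.mpr ⟨j⟩)]
    push_cast
    rfl
  calc ∑ i, negMulLog (p i) = negMulLog (p j) + ∑ i ∈ univ.erase j, negMulLog (p i) :=
        (add_sum_erase _ _ (mem_univ j)).symm
    _ ≤ negMulLog (p j) +
          (negMulLog (1 - p j) + (1 - p j) * log ((Fintype.card ι - 1 : ℤ) : ℝ)) := by
        grw [sum_negMulLog_le _ fun i _ ↦ hp i, hrest, hcard]
    _ = qaryEntropy (Fintype.card ι) (1 - p j) := by
        rw [qaryEntropy, binEntropy_one_sub, binEntropy_eq_negMulLog_add_negMulLog_one_sub]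
        ring

lemma qaryEntropy_one_sub_eq {q : ℕ} (hq : 2 ≤ q) {p : ℝ} (hp : p ≠ 1) :
    qaryEntropy q (1 - p) = -p * log p + (1 - p) * log ((q - 1) / (1 - p)) := by
  have hq' : (2 : ℝ) ≤ q := by exact_mod_cast hq
  rw [qaryEntropy, binEntropy_one_sub, binEntropy_eq_negMulLog_add_negMulLog_one_sub,
    log_div (by linarith) (sub_ne_zero.mpr hp.symm), negMulLog, negMulLog]
  push_cast
  ring

namespace Matrix.IsHermitian

variable {𝕜 n : Type*} [RCLike 𝕜] [Fintype n] [DecidableEq n] {A : Matrix n n 𝕜}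

lemma star_dotProduct_mulVec_eq_sum (hA : A.IsHermitian) (x : n → 𝕜) :
    star x ⬝ᵥ A *ᵥ x =
      ∑ i, (hA.eigenvalues i : 𝕜) * ‖inner 𝕜 (hA.eigenvectorBasis i) (WithLp.toLp 2 x)‖ ^ 2 := by
  have hT := isSymmetric_toEuclideanLin_iff.mpr hA
  rw [dotProduct_comm, ← EuclideanSpace.inner_toLp_toLp, ← hA.eigenvectorBasis.sum_inner_mul_inner]
  refine sum_congr rfl fun i _ ↦ ?_
  have hAx : WithLp.toLp 2 (A *ᵥ x) = toEuclideanLin A (WithLp.toLp 2 x) := rfl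
  rw [hAx, ← hT, toLpLin_apply, mulVec_eigenvectorBasis]
  simp only [WithLp.toLp_smul, WithLp.toLp_ofLp, inner_smul_left_eq_smul,
    RCLike.real_smul_eq_coe_mul]
  rw [← inner_conj_symm, ← RCLike.conj_mul]
  ring

lemma exists_re_star_dotProduct_mulVec_le [Nonempty n] (hA : A.IsHermitian) (x : n → 𝕜) :
    ∃ i, RCLike.re (star x ⬝ᵥ A *ᵥ x) ≤ hA.eigenvalues i * ∑ j, ‖x j‖ ^ 2 := by
  obtain ⟨i, -, hmax⟩ := exists_max_image univ hA.eigenvalues univ_nonempty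
  refine ⟨i, ?_⟩
  set c := fun j ↦ ‖inner 𝕜 (hA.eigenvectorBasis j) (WithLp.toLp 2 x)‖ ^ 2
  calc RCLike.re (star x ⬝ᵥ A *ᵥ x) = ∑ j, hA.eigenvalues j * c j := by
        simp_rw [hA.star_dotProduct_mulVec_eq_sum, c, ← RCLike.ofReal_pow, ← RCLike.ofReal_mul,
          ← RCLike.ofReal_sum, RCLike.ofReal_re]
    _ ≤ ∑ j, hA.eigenvalues i * c j :=
        sum_le_sum fun j _ ↦ mul_le_mul_of_nonneg_right (hmax j (mem_univ j)) (by positivity)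
    _ = hA.eigenvalues i * ∑ j, ‖x j‖ ^ 2 := by
        rw [← mul_sum, hA.eigenvectorBasis.sum_sq_norm_inner_right, EuclideanSpace.norm_sq_eq]

end Matrix.IsHermitian

lemma vonNeumannEntropy_eq_sum_negMulLog {ι : Type*} [Fintype ι] [DecidableEq ι]
    {X : Matrix ι ι ℂ} (hX : X.IsHermitian) :
    vonNeumannEntropy X = ∑ i, negMulLog (hX.eigenvalues i) := by
  simp [vonNeumannEntropy, hX, negMulLog]

namespace IsDensity

variable {ι : Type*} [Fintype ι] [DecidableEq ι] {X : Matrix ι ι ℂ}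

lemma sum_eigenvalues (hX : IsDensity X) : ∑ i, hX.1.isHermitian.eigenvalues i = 1 := by
  have htrace := hX.1.isHermitian.trace_eq_sum_eigenvalues
  simpa using congrArg Complex.re (htrace.symm.trans hX.2)

lemma eigenvalues_le_one (hX : IsDensity X) (i : ι) : hX.1.isHermitian.eigenvalues i ≤ 1 :=
  hX.sum_eigenvalues ▸ single_le_sum (fun j _ ↦ hX.1.eigenvalues_nonneg j) (mem_univ i)

lemma vonNeumannEntropy_le_qaryEntropy (hX : IsDensity X) (i : ι) :
    vonNeumannEntropy X ≤ qaryEntropy (Fintype.card ι) (1 - hX.1.isHermitian.eigenvalues i) := by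
  rw [vonNeumannEntropy_eq_sum_negMulLog hX.1.isHermitian]
  exact sum_negMulLog_le_qaryEntropy hX.1.eigenvalues_nonneg hX.sum_eigenvalues i

end IsDensity

/-- If a density matrix `ρ ∈ D(ℂ^d)` satisfies `⟨v, ρ v⟩ ≥ λ` for a unit vector `v` and
some `1/d ≤ λ < 1`, then `H(ρ) ≤ −λ log λ + (1−λ) log((d−1)/(1−λ))`. -/
theorem entropy_bound_of_large_eigenvector {d : ℕ} (hd : 2 ≤ d)
    (ρ : Matrix (Fin d) (Fin d) ℂ) (hρ : IsDensity ρ)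
    (v : Fin d → ℂ) (hv : ∑ i, ‖v i‖ ^ 2 = 1)
    (lam : ℝ) (hlam₁ : (d : ℝ)⁻¹ ≤ lam) (hlam₂ : lam < 1)
    (hvρ : (lam : ℂ) ≤ star v ⬝ᵥ ρ.mulVec v) :
    vonNeumannEntropy ρ ≤
      -lam * Real.log lam + (1 - lam) * Real.log ((d - 1) / (1 - lam)) := by
  have : Nonempty (Fin d) := ⟨⟨0, by omega⟩⟩
  obtain ⟨i, hi⟩ := hρ.1.isHermitian.exists_re_star_dotProduct_mulVec_le v
  set μ := hρ.1.isHermitian.eigenvalues i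
  have hlamμ : lam ≤ μ := by
    simpa [hv] using (Complex.le_def.mp hvρ).1.trans hi
  have hμ₁ : μ ≤ 1 := hρ.eigenvalues_le_one i
  have hlam₁' : 1 - lam ≤ 1 - 1 / (d : ℝ) := by rw [one_div]; linarith
  calc vonNeumannEntropy ρ ≤ qaryEntropy d (1 - μ) := by
        simpa using hρ.vonNeumannEntropy_le_qaryEntropy i
    _ ≤ qaryEntropy d (1 - lam) :=
        (qaryEntropy_strictMonoOn hd).monotoneOn ⟨by linarith, by linarith⟩
          ⟨by linarith, hlam₁'⟩ (by linarith)
    _ = _ := qaryEntropy_one_sub_eq hd hlam₂.ne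
end
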